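/- Let X be a Hilbert space, T : X → X the operator defined by A(Tx, y) = B(x, y) as in the Lax–Milgram setting with A coercive and nondegenerate. If (λ, x) is an eigenpair of T with λ ≠ 0 and x ≠ 0, and B has the structure B((w,p),(φ,ψ)) = (ρ₀ w, ψ) + (ρ₁ p, φ) on a product space X = X₁ × X₂, then the first component w of x is nonzero, provided that B((0,p),(φ,ψ)) = 0 for all ψ would force via the eigen-equation that p = 0; i.e., (0, p) with p ≠ 0 cannot be an eigenfunction of T for a nonzero eigenvalue. -/
import Mathlib


/-- on a product Hilbert space `X = X₁ × X₂` (modeling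
`(H₀¹(D))² × (H¹(D))²`), let
`A((w,p),(φ,ψ)) = a(w,ψ) + d(p,ψ) + a'(p,φ)` with `d(p,p) ≥ ρ_min‖p‖²`, `ρ_min > 0`, and
`B((w,p),(φ,ψ)) = b₀(w,ψ) + b₁(p,φ)`, and let `T` be the solution operator defined by
`A(Tz, y) = B(z, y)`. Then `(0, p)` with `p ≠ 0` cannot be an eigenfunction of `T` for a
nonzero eigenvalue: if `T(0,p) = λ·(0,p)` with `λ ≠ 0`, then `p = 0`. -/
theorem stmt19_no_spurious_eigenfunction
    {X₁ X₂ : Type*} [NormedAddCommGroup X₁] [InnerProductSpace ℝ X₁] [CompleteSpace X₁]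
    [NormedAddCommGroup X₂] [InnerProductSpace ℝ X₂] [CompleteSpace X₂]
    (a d : X₂ → X₂ → ℝ) (a' : X₂ → X₁ → ℝ) (aw b₀ : X₁ → X₂ → ℝ) (b₁ : X₂ → X₁ → ℝ)
    (A B : X₁ × X₂ → X₁ × X₂ → ℝ)
    (hA : ∀ (w φ : X₁) (p ψ : X₂), A (w, p) (φ, ψ) = aw w ψ + d p ψ + a' p φ)
    (hB : ∀ (w φ : X₁) (p ψ : X₂), B (w, p) (φ, ψ) = b₀ w ψ + b₁ p φ)
    (ρmin : ℝ) (hρ : 0 < ρmin)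
    (hd : ∀ q : X₂, d q q ≥ ρmin * ‖q‖ ^ 2)
    (haw0 : ∀ ψ : X₂, aw 0 ψ = 0) (ha'0 : ∀ q : X₂, a' q 0 = 0)
    (hb₀0 : ∀ ψ : X₂, b₀ 0 ψ = 0) (hb₁0 : ∀ q : X₂, b₁ q 0 = 0)
    (hAhom : ∀ (c : ℝ) (z y : X₁ × X₂), A (c • z) y = c * A z y)
    (T : X₁ × X₂ → X₁ × X₂)
    (hT : ∀ z y : X₁ × X₂, A (T z) y = B z y)
    (lam : ℝ) (hlam : lam ≠ 0)
    (p : X₂) (heig : T (0, p) = lam • ((0 : X₁), p)) :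
    p = 0 := by
  have key : lam * d p p = 0 := by
    have h1 : A (T (0, p)) ((0 : X₁), p) = B (0, p) ((0 : X₁), p) := hT _ _
    rw [heig, hAhom, hA, hB, haw0, ha'0, hb₀0, hb₁0] at h1
    simpa using h1
  have hdp : d p p = 0 := by
    rcases mul_eq_zero.mp key with h | h
    · exact absurd h hlam
    · exact h
  have hnorm : ρmin * ‖p‖ ^ 2 ≤ 0 := hdp ▸ hd p
  by_contra hp
  have h1 : 0 < ‖p‖ := norm_pos_iff.mpr hp
  have : 0 < ρmin * ‖p‖ ^ 2 := mul_pos hρ (pow_pos h1 2)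
  linarith
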